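/- arXiv:2009.13679 — 4 statements merged into one kernel-verified Lean document; each statement's English description precedes it below -/
import Mathlib

section
/- Let R be a commutative ring and y_1, ..., y_n a regular sequence in R. If g ∈ R and a_1, ..., a_n, N_1, ..., N_n are natural numbers with a_i ≤ N_i for all i, and (y_1^{a_1} y_2^{a_2} ⋯ y_n^{a_n}) · g lies in the ideal ⟨y_1^{N_1}, ..., y_n^{N_n}⟩, then g lies in the ideal ⟨y_1^{N_1 - a_1}, ..., y_n^{N_n - a_n}⟩. -/
namespace Stmt0Aux

open Finset

variable {R : Type*} [CommRing R]


open Finset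

variable {R : Type*} [CommRing R]

/-- Monomial in the `y`'s with exponent vector `α`. -/
def mon {c : ℕ} (y : Fin c → R) (α : Fin c → ℕ) : R := ∏ i, y i ^ α i

/-- Exponent vectors of total degree `d`. -/
abbrev AT (c d : ℕ) : Finset (Fin c → ℕ) := Finset.Nat.antidiagonalTuple c d

lemma mem_AT {c d : ℕ} {α : Fin c → ℕ} : α ∈ AT c d ↔ ∑ i, α i = d :=
  Finset.Nat.mem_antidiagonalTuple

lemma mon_add {c : ℕ} (y : Fin c → R) (α β : Fin c → ℕ) :
    mon y (α + β) = mon y α * mon y β := by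
  simp [mon, Pi.add_apply, pow_add, Finset.prod_mul_distrib]

lemma mon_single {c : ℕ} (y : Fin c → R) (i : Fin c) (k : ℕ) :
    mon y (Pi.single i k) = y i ^ k := by
  unfold mon
  rw [Finset.prod_eq_single i]
  · rw [Pi.single_eq_same]
  · intro j _ hj
    rw [Pi.single_eq_of_ne hj, pow_zero]
  · intro hi; exact absurd (Finset.mem_univ i) hi

lemma mon_add_single {c : ℕ} (y : Fin c → R) (α : Fin c → ℕ) (i : Fin c) :
    mon y (α + Pi.single i 1) = mon y α * y i := by
  rw [mon_add, mon_single, pow_one]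

/-- L3: a monomial of degree `d` lies in `I^d`. -/
lemma mon_mem_pow {c : ℕ} (y : Fin c → R) :
    ∀ (d : ℕ) (α : Fin c → ℕ), (∑ i, α i = d) →
      mon y α ∈ (Ideal.span (Set.range y)) ^ d := by
  intro d
  induction d with
  | zero =>
    intro α hα
    have : ∀ i, α i = 0 := by
      intro i
      have := (Finset.sum_eq_zero_iff.mp hα) i (Finset.mem_univ i)
      exact this
    simp [mon, this]
  | succ d ih =>
    intro α hα
    have hex : ∃ i, α i ≠ 0 := by
      by_contra hc
      push_neg at hc
      simp [hc] at hα
    obtain ⟨i, hi⟩ := hex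
    set β : Fin c → ℕ := fun j => α j - (Pi.single i 1 : Fin c → ℕ) j with hβ
    have hαβ : α = β + Pi.single i 1 := by
      funext j
      by_cases hji : j = i
      · subst hji; simp [hβ, Pi.single_eq_same]; omega
      · simp [hβ, Pi.single_eq_of_ne hji]
    have hsum : ∑ j, β j = d := by
      have h1 : ∑ j, α j = (∑ j, β j) + ∑ j, Pi.single i 1 j := by
        rw [hαβ]; exact Finset.sum_add_distrib
      have h2 : ∑ j, Pi.single i 1 j = 1 := by rw [Finset.sum_pi_single']; exact if_pos (Finset.mem_univ i)
      omega
    rw [hαβ, mon_add_single, pow_succ]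
    exact Ideal.mul_mem_mul (ih β hsum)
      (Ideal.subset_span (Set.mem_range_self i))

lemma sum_rot {A B C M : Type*} [AddCommMonoid M] (s : Finset A) (t : Finset B) (u : Finset C)
    (f : A → B → C → M) :
    ∑ a ∈ s, ∑ b ∈ t, ∑ c ∈ u, f a b c = ∑ c ∈ u, ∑ a ∈ s, ∑ b ∈ t, f a b c := by
  calc ∑ a ∈ s, ∑ b ∈ t, ∑ c ∈ u, f a b c
      = ∑ a ∈ s, ∑ c ∈ u, ∑ b ∈ t, f a b c :=
        Finset.sum_congr rfl fun a _ => Finset.sum_comm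
    _ = ∑ c ∈ u, ∑ a ∈ s, ∑ b ∈ t, f a b c := Finset.sum_comm

/-- L4: representation of elements of `I^d` as coefficient combinations of degree-`d`
monomials. -/
lemma rep_pow {c : ℕ} (y : Fin c → R) :
    ∀ (d : ℕ) (x : R), x ∈ (Ideal.span (Set.range y)) ^ d →
      ∃ co : (Fin c → ℕ) → R, x = ∑ α ∈ AT c d, co α * mon y α := by
  intro d
  induction d with
  | zero =>
    intro x _
    refine ⟨fun _ => x, ?_⟩
    rw [show AT c 0 = {0} from Finset.Nat.antidiagonalTuple_zero_right c, Finset.sum_singleton]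
    simp [mon]
  | succ d ih =>
    intro x hx
    rw [pow_succ] at hx
    refine Submodule.mul_induction_on hx (fun m hm r hr => ?_) (fun x₁ x₂ ih₁ ih₂ => ?_)
    ·
      obtain ⟨co, hco⟩ := ih m hm
      rw [Ideal.mem_span_range_iff_exists_fun] at hr
      obtain ⟨t, ht⟩ := hr
      refine ⟨fun γ => ∑ α ∈ AT c d, ∑ i, if γ = α + Pi.single i 1 then co α * t i else 0, ?_⟩
      have key : ∀ α ∈ AT c d, ∀ i : Fin c,
          ∑ γ ∈ AT c (d+1), (if γ = α + Pi.single i 1 then co α * t i else 0) * mon y γ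
            = co α * t i * mon y (α + Pi.single i 1) := by
        intro α hα i
        rw [Finset.sum_eq_single_of_mem (α + Pi.single i 1)]
        · rw [if_pos rfl]
        · rw [mem_AT]
          have h1 : ∑ j, (α + Pi.single i 1 : Fin c → ℕ) j
              = (∑ j, α j) + ∑ j, (Pi.single i 1 : Fin c → ℕ) j := by
            simp_rw [Pi.add_apply]
            exact Finset.sum_add_distrib
          have h2 : ∑ j, (Pi.single i 1 : Fin c → ℕ) j = 1 := by
            rw [Finset.sum_pi_single']; exact if_pos (Finset.mem_univ i)
          have h3 : ∑ j, α j = d := mem_AT.mp hα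
          omega
        · intro γ _ hne
          rw [if_neg hne, zero_mul]
      calc m * r = (∑ α ∈ AT c d, co α * mon y α) * ∑ i, t i * y i := by rw [← hco, ← ht]
        _ = ∑ α ∈ AT c d, ∑ i, co α * t i * mon y (α + Pi.single i 1) := by
            rw [Finset.sum_mul_sum]
            refine Finset.sum_congr rfl fun α _ => Finset.sum_congr rfl fun i _ => ?_
            rw [mon_add_single]; ring
        _ = ∑ α ∈ AT c d, ∑ i, ∑ γ ∈ AT c (d+1),
              (if γ = α + Pi.single i 1 then co α * t i else 0) * mon y γ := by
            refine Finset.sum_congr rfl fun α hα => Finset.sum_congr rfl fun i _ => ?_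
            rw [key α hα i]
        _ = ∑ γ ∈ AT c (d+1),
              (∑ α ∈ AT c d, ∑ i, if γ = α + Pi.single i 1 then co α * t i else 0) * mon y γ := by
            simp_rw [Finset.sum_mul]
            exact sum_rot _ _ _ _
    · obtain ⟨co₁, hco₁⟩ := ih₁
      obtain ⟨co₂, hco₂⟩ := ih₂
      refine ⟨fun γ => co₁ γ + co₂ γ, ?_⟩
      rw [hco₁, hco₂, ← Finset.sum_add_distrib]
      refine Finset.sum_congr rfl fun γ _ => ?_
      ring

/-- L6: elements of `J * I^d` are degree-`d` combinations with coefficients in `J`. -/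
lemma rep_pow_mul {c : ℕ} (y : Fin c → R) (J : Ideal R) (d : ℕ) (x : R)
    (hx : x ∈ (Ideal.span (Set.range y)) ^ d * J) :
    ∃ co : (Fin c → ℕ) → R, (∀ α, co α ∈ J) ∧ x = ∑ α ∈ AT c d, co α * mon y α := by
  refine Submodule.mul_induction_on hx (fun m hm r hr => ?_) (fun x₁ x₂ ih₁ ih₂ => ?_)
  · obtain ⟨co, hco⟩ := rep_pow y d m hm
    refine ⟨fun α => co α * r, fun α => Ideal.mul_mem_left _ _ hr, ?_⟩
    rw [hco, Finset.sum_mul]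
    exact Finset.sum_congr rfl fun α _ => by ring
  · obtain ⟨co₁, h₁, hco₁⟩ := ih₁
    obtain ⟨co₂, h₂, hco₂⟩ := ih₂
    refine ⟨fun α => co₁ α + co₂ α, fun α => Ideal.add_mem _ (h₁ α) (h₂ α), ?_⟩
    rw [hco₁, hco₂, ← Finset.sum_add_distrib]
    exact Finset.sum_congr rfl fun α _ => by ring

/-- The special case `J = I`. -/
lemma rep_pow_succ {c : ℕ} (y : Fin c → R) (d : ℕ) (x : R)
    (hx : x ∈ (Ideal.span (Set.range y)) ^ (d + 1)) :
    ∃ co : (Fin c → ℕ) → R, (∀ α, co α ∈ Ideal.span (Set.range y)) ∧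
      x = ∑ α ∈ AT c d, co α * mon y α := by
  refine rep_pow_mul y _ d x ?_
  rwa [← pow_succ]

/-- L7: representation of members of the span of a finite image. -/
lemma rep_span_image {ι : Type*} [DecidableEq ι] (s : Finset ι) (f : ι → R) (x : R)
    (hx : x ∈ Ideal.span (f '' ↑s)) :
    ∃ co : ι → R, x = ∑ γ ∈ s, co γ * f γ := by
  refine Submodule.span_induction ?_ ?_ ?_ ?_ hx
  · rintro b ⟨γ₀, hγ₀, rfl⟩
    refine ⟨fun γ => if γ = γ₀ then 1 else 0, ?_⟩
    have hterm : ∀ γ ∈ s, (if γ = γ₀ then (1:R) else 0) * f γ = if γ = γ₀ then f γ else 0 := by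
      intro γ _
      split <;> simp
    rw [Finset.sum_congr rfl hterm, Finset.sum_ite_eq' s γ₀ f,
      if_pos (Finset.mem_coe.mp hγ₀)]
  · exact ⟨0, by simp⟩
  · rintro a b _ _ ⟨ca, hca⟩ ⟨cb, hcb⟩
    refine ⟨fun γ => ca γ + cb γ, ?_⟩
    rw [hca, hcb, ← Finset.sum_add_distrib]
    exact Finset.sum_congr rfl fun γ _ => by ring
  · rintro r a _ ⟨ca, hca⟩
    refine ⟨fun γ => r * ca γ, ?_⟩
    rw [smul_eq_mul, hca, Finset.mul_sum]
    exact Finset.sum_congr rfl fun γ _ => by ring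

lemma mon_snoc {c : ℕ} (y : Fin (c+1) → R) (β : Fin c → ℕ) (j : ℕ) :
    mon y (Fin.snoc β j) = mon (y ∘ Fin.castSucc) β * (y (Fin.last c))^j := by
  unfold mon
  rw [Fin.prod_univ_castSucc]
  simp [Fin.snoc_castSucc, Fin.snoc_last]

lemma sum_snoc {c : ℕ} (β : Fin c → ℕ) (j : ℕ) :
    ∑ i, (Fin.snoc β j : Fin (c+1) → ℕ) i = (∑ i, β i) + j := by
  rw [Fin.sum_univ_castSucc]
  simp [Fin.snoc_castSucc, Fin.snoc_last]

lemma split_sum {c d : ℕ} (f : (Fin (c+1) → ℕ) → R) :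
    ∑ α ∈ AT (c+1) d, f α
      = ∑ j ∈ Finset.range (d+1), ∑ β ∈ AT c (d-j), f (Fin.snoc β j) := by
  rw [Finset.sum_sigma']
  refine Finset.sum_nbij' (fun α => ⟨α (Fin.last c), α ∘ Fin.castSucc⟩)
    (fun p => Fin.snoc p.2 p.1) ?_ ?_ ?_ ?_ ?_
  · intro α hα
    rw [mem_AT, Fin.sum_univ_castSucc] at hα
    have h1 : α (Fin.last c) ∈ Finset.range (d+1) := Finset.mem_range.mpr (by omega)
    have h2 : (α ∘ Fin.castSucc) ∈ AT c (d - α (Fin.last c)) := by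
      rw [mem_AT]
      simp only [Function.comp_apply]
      omega
    exact Finset.mem_sigma.mpr ⟨h1, h2⟩
  · rintro ⟨j, β⟩ hp
    rw [Finset.mem_sigma] at hp
    obtain ⟨hj, hβ⟩ := hp
    rw [Finset.mem_range] at hj
    rw [mem_AT] at hβ ⊢
    rw [sum_snoc, hβ]
    omega
  · intro α _
    exact Fin.snoc_init_self α
  · rintro ⟨j, β⟩ hp
    rw [Finset.mem_sigma] at hp
    refine Sigma.ext ?_ ?_
    · simp [Fin.snoc_last]
    · simp [Fin.snoc_castSucc, Fin.init_snoc]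
  · intro α _
    exact congrArg f (Fin.snoc_init_self α).symm

theorem Zthm :
    ∀ (c : ℕ) (y : Fin c → R)
      (_ : ∀ i : Fin c, ∀ r : R,
        y i * r ∈ Ideal.span (y '' {j : Fin c | j < i}) →
        r ∈ Ideal.span (y '' {j : Fin c | j < i}))
      (d : ℕ) (co : (Fin c → ℕ) → R),
      (∑ α ∈ AT c d, co α * mon y α) = 0 →
      ∀ α ∈ AT c d, co α ∈ Ideal.span (Set.range y) := by
  intro c
  induction c with
  | zero =>
    intro y _ d co hrel α hα
    have hd : d = 0 := by
      have := mem_AT.mp hα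
      simpa using this.symm
    subst hd
    have hα0 : α = 0 := funext fun i => i.elim0
    have : co α = 0 := by
      rw [show AT 0 0 = {0} from Finset.Nat.antidiagonalTuple_zero_right 0,
        Finset.sum_singleton] at hrel
      have hm : mon y (0 : Fin 0 → ℕ) = 1 := by simp [mon]
      rw [hm, mul_one] at hrel
      rw [hα0]; exact hrel
    rw [this]
    exact Ideal.zero_mem _
  | succ c IH =>
    intro y hreg d co hrel
    set z : R := y (Fin.last c) with hz
    set y' : Fin c → R := y ∘ Fin.castSucc with hy'
    set J : Ideal R := Ideal.span (Set.range y') with hJ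
    set I : Ideal R := Ideal.span (Set.range y) with hI
    have hJI : J ≤ I := Ideal.span_mono (Set.range_comp_subset_range _ _)
    have hzI : z ∈ I := Ideal.subset_span (Set.mem_range_self _)
    -- tail is a regular sequence
    have hreg' : ∀ i : Fin c, ∀ r : R,
        y' i * r ∈ Ideal.span (y' '' {j : Fin c | j < i}) →
        r ∈ Ideal.span (y' '' {j : Fin c | j < i}) := by
      intro i r hir
      have himg : y' '' {j : Fin c | j < i} = y '' {j : Fin (c+1) | j < Fin.castSucc i} := by
        ext x
        constructor
        · rintro ⟨j, hj, rfl⟩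
          exact ⟨Fin.castSucc j, by simpa [Fin.castSucc_lt_castSucc_iff] using hj, rfl⟩
        · rintro ⟨j', hj', rfl⟩
          have hne : j' ≠ Fin.last c := by
            intro hEq
            rw [hEq] at hj'
            exact absurd (lt_trans hj' (Fin.castSucc_lt_last i)) (lt_irrefl _)
          refine ⟨j'.castPred hne, ?_, by simp [hy']⟩
          have : Fin.castSucc (j'.castPred hne) = j' := Fin.castSucc_castPred j' hne
          rw [Set.mem_setOf_eq, ← Fin.castSucc_lt_castSucc_iff, this]
          exact hj'
      rw [himg] at hir ⊢
      exact hreg (Fin.castSucc i) r hir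
    -- the span of the elements before the last one
    have hlast : y '' {j : Fin (c+1) | j < Fin.last c} = Set.range y' := by
      ext x
      constructor
      · rintro ⟨j, hj, rfl⟩
        have hne : j ≠ Fin.last c := ne_of_lt hj
        exact ⟨j.castPred hne, by simp [hy']⟩
      · rintro ⟨i, rfl⟩
        exact ⟨Fin.castSucc i, Fin.castSucc_lt_last i, rfl⟩
    -- z is a nonzerodivisor modulo every power of J
    have NZDm : ∀ (m : ℕ) (h : R), z * h ∈ J ^ m → h ∈ J ^ m := by
      intro m
      induction m with
      | zero => intro h _; simp
      | succ m ihm =>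
        intro h hzh
        have h1 : h ∈ J ^ m := ihm h (Ideal.pow_le_pow_right (Nat.le_succ m) hzh)
        obtain ⟨hb, hhb⟩ := rep_pow y' m h h1
        obtain ⟨w, hwJ, hw⟩ := rep_pow_succ y' m (z*h) hzh
        have hrel2 : ∑ β ∈ AT c m, (z * hb β - w β) * mon y' β = 0 := by
          have h3 : z * h = ∑ β ∈ AT c m, (z * hb β) * mon y' β := by
            rw [hhb, Finset.mul_sum]
            exact Finset.sum_congr rfl fun β _ => by ring
          have h4 : ∑ β ∈ AT c m, (z * hb β - w β) * mon y' β
              = (∑ β ∈ AT c m, (z * hb β) * mon y' β) - ∑ β ∈ AT c m, w β * mon y' β := by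
            rw [← Finset.sum_sub_distrib]
            exact Finset.sum_congr rfl fun β _ => by ring
          rw [h4, ← h3, ← hw, sub_self]
        have hcoef := IH y' hreg' m (fun β => z * hb β - w β) hrel2
        have hbJ : ∀ β ∈ AT c m, hb β ∈ J := by
          intro β hβ
          have h2 : z * hb β ∈ J := by
            have := hcoef β hβ
            have : z * hb β = (z * hb β - w β) + w β := by ring
            rw [this]
            exact Ideal.add_mem _ (hcoef β hβ) (hwJ β)
          have := hreg (Fin.last c) (hb β)
          rw [hlast] at this
          exact this h2
        rw [hhb]
        refine Ideal.sum_mem _ fun β hβ => ?_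
        rw [pow_succ']
        exact Ideal.mul_mem_mul (hbJ β hβ) (mon_mem_pow y' m β (mem_AT.mp hβ))
    -- group the relation by powers of the last element
    set G : ℕ → R := fun j => ∑ β ∈ AT c (d-j), co (Fin.snoc β j) * mon y' β with hG
    set S : ℕ → R := fun j => ∑ k ∈ Finset.range (d+1-j), z^k * G (j+k) with hS
    have hS0 : S 0 = 0 := by
      have e1 : S 0 = ∑ α ∈ AT (c+1) d, co α * mon y α := by
        rw [split_sum (fun α => co α * mon y α)]
        simp only [hS, hG, Nat.sub_zero, Nat.zero_add, zero_add]
        refine Finset.sum_congr rfl fun j _ => ?_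
        rw [Finset.mul_sum]
        refine Finset.sum_congr rfl fun β _ => ?_
        rw [mon_snoc]
        ring
      rw [e1, hrel]
    have Srec : ∀ j, j ≤ d → S j = G j + z * S (j+1) := by
      intro j hj
      have h1 : d + 1 - j = (d - j) + 1 := by omega
      have h2 : d + 1 - (j+1) = d - j := by omega
      simp only [hS, h1, h2]
      rw [Finset.sum_range_succ' (fun k => z ^ k * G (j + k)) (d - j)]
      have e1 : ∀ k ∈ Finset.range (d-j), z^(k+1) * G (j+(k+1)) = z * (z^k * G (j+1+k)) := by
        intro k _
        rw [show j+(k+1) = j+1+k from by omega, pow_succ']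
        ring
      rw [Finset.sum_congr rfl e1, ← Finset.mul_sum]
      have e0 : z^0 * G (j+0) = G j := by
        rw [pow_zero, one_mul, Nat.add_zero]
      rw [e0, add_comm]
    have Inv : ∀ j, S j ∈ J ^ (d+1-j) := by
      intro j
      induction j with
      | zero => rw [hS0]; exact Ideal.zero_mem _
      | succ j ihj =>
        by_cases hj : j ≤ d
        · have hSj : S j ∈ J ^ (d - j) :=
            Ideal.pow_le_pow_right (by omega) ihj
          have hGj : G j ∈ J ^ (d - j) := by
            refine Ideal.sum_mem _ fun β hβ =>
              Ideal.mul_mem_left _ _ (mon_mem_pow y' _ β (mem_AT.mp hβ))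
          have hzS : z * S (j+1) = S j - G j := by rw [Srec j hj]; ring
          have hm : z * S (j+1) ∈ J ^ (d-j) := by
            rw [hzS]; exact Ideal.sub_mem _ hSj hGj
          have := NZDm (d-j) _ hm
          have he : d + 1 - (j+1) = d - j := by omega
          rw [he]; exact this
        · have he : d + 1 - (j+1) = 0 := by omega
          rw [he, pow_zero, Ideal.one_eq_top]
          exact Submodule.mem_top
    have Coeff : ∀ j, j ≤ d → ∀ β ∈ AT c (d-j), co (Fin.snoc β j) ∈ I := by
      intro j hj β hβ
      have h1 : S j ∈ J ^ ((d-j)+1) := by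
        have := Inv j; rwa [show d+1-j = (d-j)+1 by omega] at this
      obtain ⟨w, hwJ, hw⟩ := rep_pow_succ y' (d-j) _ h1
      have h2 : S (j+1) ∈ J ^ (d-j) := by
        have := Inv (j+1); rwa [show d+1-(j+1) = d-j by omega] at this
      obtain ⟨sc, hsc⟩ := rep_pow y' (d-j) _ h2
      have hrel3 : ∑ β' ∈ AT c (d-j),
          (co (Fin.snoc β' j) + z * sc β' - w β') * mon y' β' = 0 := by
        have e1 : ∑ β' ∈ AT c (d-j), (co (Fin.snoc β' j) + z * sc β' - w β') * mon y' β'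
            = G j + z * S (j+1) - S j := by
          rw [hw, hsc, Finset.mul_sum]
          simp only [hG]
          rw [← Finset.sum_add_distrib, ← Finset.sum_sub_distrib]
          exact Finset.sum_congr rfl fun β' _ => by ring
        rw [e1, Srec j hj]
        ring
      have hcoef := IH y' hreg' (d-j) _ hrel3 β hβ
      have e2 : co (Fin.snoc β j)
          = ((co (Fin.snoc β j) + z * sc β - w β) - z * sc β) + w β := by ring
      rw [e2]
      exact Ideal.add_mem _
        (Ideal.sub_mem _ (hJI hcoef) (Ideal.mul_mem_right _ _ hzI)) (hJI (hwJ β))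
    intro α hα
    have hsum := mem_AT.mp hα
    rw [Fin.sum_univ_castSucc] at hsum
    have hj : α (Fin.last c) ≤ d := by omega
    have hβ : (α ∘ Fin.castSucc) ∈ AT c (d - α (Fin.last c)) := by
      rw [mem_AT]
      simp only [Function.comp_apply]
      omega
    have hfin := Coeff (α (Fin.last c)) hj (α ∘ Fin.castSucc) hβ
    have hsn : (Fin.snoc (α ∘ Fin.castSucc) (α (Fin.last c)) : Fin (c+1) → ℕ) = α :=
      Fin.snoc_init_self α
    rwa [hsn] at hfin

/-- Quasi-regularity: a degree-`d` form landing in `I^(d+1)` has coefficients in `I`. -/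
lemma qr {c : ℕ} (y : Fin c → R)
    (hreg : ∀ i : Fin c, ∀ r : R,
      y i * r ∈ Ideal.span (y '' {j : Fin c | j < i}) →
      r ∈ Ideal.span (y '' {j : Fin c | j < i}))
    (d : ℕ) (co : (Fin c → ℕ) → R)
    (h : (∑ α ∈ AT c d, co α * mon y α) ∈ (Ideal.span (Set.range y)) ^ (d+1)) :
    ∀ α ∈ AT c d, co α ∈ Ideal.span (Set.range y) := by
  obtain ⟨w, hwI, hw⟩ := rep_pow_succ y d _ h
  have hrel : ∑ α ∈ AT c d, (co α - w α) * mon y α = 0 := by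
    have e1 : ∑ α ∈ AT c d, (co α - w α) * mon y α
        = (∑ α ∈ AT c d, co α * mon y α) - ∑ α ∈ AT c d, w α * mon y α := by
      rw [← Finset.sum_sub_distrib]
      exact Finset.sum_congr rfl fun α _ => by ring
    rw [e1, hw, sub_self]
  intro α hα
  have h1 := Zthm c y hreg d (fun α => co α - w α) hrel α hα
  have e : co α = (co α - w α) + w α := by ring
  rw [e]
  exact Ideal.add_mem _ h1 (hwI α)

/-- The set of degree-`D` exponent vectors dominating some `N i` in coordinate `i`. -/
def NDiv {n : ℕ} (N : Fin n → ℕ) (D : ℕ) : Finset (Fin n → ℕ) :=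
  (AT n D).filter (fun γ => ∃ i, N i ≤ γ i)

/-- The ideal generated by `N`-divisible monomials of degree `D`. -/
def CD {n : ℕ} (y : Fin n → R) (N : Fin n → ℕ) (D : ℕ) : Ideal R :=
  Ideal.span ((mon y) '' ↑(NDiv N D))

lemma mem_NDiv {n : ℕ} {N : Fin n → ℕ} {D : ℕ} {γ : Fin n → ℕ} :
    γ ∈ NDiv N D ↔ γ ∈ AT n D ∧ ∃ i, N i ≤ γ i := by
  rw [NDiv]
  exact Finset.mem_filter

lemma CD_le_pow {n : ℕ} (y : Fin n → R) (N : Fin n → ℕ) (D : ℕ) :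
    CD y N D ≤ (Ideal.span (Set.range y)) ^ D := by
  rw [CD, Ideal.span_le]
  rintro x ⟨γ, hγ, rfl⟩
  have hγ' : γ ∈ AT n D := (mem_NDiv.mp (by exact_mod_cast hγ)).1
  exact mon_mem_pow y D γ (mem_AT.mp hγ')

/-- Push-up lemma: an element of `K = (y₁^{N₁},…)` lying in `I^D` lies in
(N-divisible degree-D monomials) + I^(D+1). -/
lemma pushup {n : ℕ} (y : Fin n → R)
    (hreg : ∀ i : Fin n, ∀ r : R,
      y i * r ∈ Ideal.span (y '' {j : Fin n | j < i}) →
      r ∈ Ideal.span (y '' {j : Fin n | j < i}))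
    (N : Fin n → ℕ) (D : ℕ) (x : R)
    (hxK : x ∈ Ideal.span (Set.range fun i => y i ^ N i))
    (hxD : x ∈ (Ideal.span (Set.range y)) ^ D) :
    x ∈ CD y N D ⊔ (Ideal.span (Set.range y)) ^ (D+1) := by
  set I : Ideal R := Ideal.span (Set.range y) with hI
  set F : ℕ → Ideal R := fun m => ((Finset.Icc m D).sup (CD y N)) ⊔ I ^ (D+1) with hF
  have hFle : ∀ m, F m ≤ I ^ (min m (D+1)) := by
    intro m
    refine sup_le ?_ ?_
    · refine Finset.sup_le fun e he => ?_
      rw [Finset.mem_Icc] at he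
      refine le_trans (CD_le_pow y N e) (Ideal.pow_le_pow_right ?_)
      omega
    · exact Ideal.pow_le_pow_right (by omega)
  -- step
  have step : ∀ m, m < D → ∀ ξ, ξ ∈ I^D → ξ ∈ F m → ξ ∈ F (m+1) := by
    intro m hm ξ hξD hξ
    have hicc : Finset.Icc m D = insert m (Finset.Icc (m+1) D) := by
      ext k
      simp only [Finset.mem_Icc, Finset.mem_insert]
      omega
    have hFm : F m = CD y N m ⊔ F (m+1) := by
      simp only [hF, hicc, Finset.sup_insert]
      rw [sup_assoc]
    rw [hFm] at hξ
    obtain ⟨A, hA, B, hB, hAB⟩ := Submodule.mem_sup.mp hξ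
    have hAI : A ∈ I ^ (m+1) := by
      have hBI : B ∈ I ^ (m+1) := by
        have := hFle (m+1) hB
        exact Ideal.pow_le_pow_right (by omega) this
      have hξI : ξ ∈ I ^ (m+1) := Ideal.pow_le_pow_right (by omega) hξD
      have : A = ξ - B := by rw [← hAB]; ring
      rw [this]
      exact Ideal.sub_mem _ hξI hBI
    -- represent A over the N-divisible monomials of degree m
    obtain ⟨u, hu⟩ := rep_span_image (NDiv N m) (mon y) A hA
    -- extended coefficients
    set u' : (Fin n → ℕ) → R := fun γ => if γ ∈ NDiv N m then u γ else 0 with hu'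
    have hurep : A = ∑ γ ∈ AT n m, u' γ * mon y γ := by
      rw [hu, NDiv, Finset.sum_filter]
      refine Finset.sum_congr rfl fun γ hγ => ?_
      simp only [hu']
      by_cases hmem : γ ∈ NDiv N m
      · rw [if_pos hmem, if_pos (mem_NDiv.mp hmem).2]
      · rw [if_neg hmem, if_neg (fun hP => hmem (mem_NDiv.mpr ⟨hγ, hP⟩)), zero_mul]
    have huI : ∀ γ ∈ AT n m, u' γ ∈ I := by
      rw [hurep] at hAI
      exact qr y hreg m u' hAI
    -- A lands in CD (m+1)
    have hACD : A ∈ CD y N (m+1) := by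
      rw [hu]
      refine Ideal.sum_mem _ fun γ hγ => ?_
      have hγAT : γ ∈ AT n m := (mem_NDiv.mp hγ).1
      have hγN : ∃ i, N i ≤ γ i := (mem_NDiv.mp hγ).2
      have huγ : u γ ∈ I := by
        have := huI γ hγAT
        simp only [hu'] at this; rwa [if_pos hγ] at this
      rw [Ideal.mem_span_range_iff_exists_fun] at huγ
      obtain ⟨t, ht⟩ := huγ
      have e : u γ * mon y γ = ∑ i, t i * mon y (γ + Pi.single i 1) := by
        rw [← ht, Finset.sum_mul]
        refine Finset.sum_congr rfl fun i _ => ?_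
        rw [mon_add_single]
        ring
      rw [e]
      refine Ideal.sum_mem _ fun i _ => Ideal.mul_mem_left _ _ ?_
      refine Ideal.subset_span ⟨γ + Pi.single i 1, ?_, rfl⟩
      rw [Finset.mem_coe, mem_NDiv]
      constructor
      · rw [mem_AT]
        have h1 : ∑ j, (γ + Pi.single i 1 : Fin n → ℕ) j
            = (∑ j, γ j) + ∑ j, (Pi.single i 1 : Fin n → ℕ) j := by
          simp_rw [Pi.add_apply]
          exact Finset.sum_add_distrib
        have h2 : ∑ j, (Pi.single i 1 : Fin n → ℕ) j = 1 := by
          rw [Finset.sum_pi_single']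
          exact if_pos (Finset.mem_univ i)
        have h3 := mem_AT.mp hγAT
        omega
      · obtain ⟨i₀, hi₀⟩ := hγN
        exact ⟨i₀, le_trans hi₀ (by simp [Pi.add_apply])⟩
    have hCDF : CD y N (m+1) ≤ F (m+1) := by
      refine le_trans (Finset.le_sup (f := CD y N) ?_) le_sup_left
      rw [Finset.mem_Icc]
      omega
    rw [← hAB]
    exact Ideal.add_mem _ (hCDF hACD) hB
  -- start: K ≤ F 0
  have start : x ∈ F 0 := by
    have hK : Ideal.span (Set.range fun i => y i ^ N i) ≤ F 0 := by
      rw [Ideal.span_le]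
      rintro ξ ⟨i, rfl⟩
      by_cases hNi : N i ≤ D
      · have h1 : (y i ^ N i : R) ∈ CD y N (N i) := by
          refine Ideal.subset_span ⟨Pi.single i (N i), ?_, mon_single y i (N i)⟩
          rw [Finset.mem_coe, mem_NDiv]
          refine ⟨mem_AT.mpr ?_, ⟨i, by simp⟩⟩
          rw [Finset.sum_pi_single']
          exact if_pos (Finset.mem_univ i)
        have h2 : CD y N (N i) ≤ F 0 := by
          refine le_trans (Finset.le_sup (f := CD y N) ?_) le_sup_left
          rw [Finset.mem_Icc]
          omega
        exact h2 h1
      · have h1 : (y i ^ N i : R) ∈ I ^ (D+1) := by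
          have h2 : (y i ^ N i : R) ∈ I ^ (N i) := by
            have := mon_mem_pow y (N i) (Pi.single i (N i)) (by
              rw [Finset.sum_pi_single']
              exact if_pos (Finset.mem_univ i))
            rwa [mon_single] at this
          exact Ideal.pow_le_pow_right (by omega) h2
        exact le_sup_right (α := Ideal R) h1
    exact hK hxK
  -- iterate
  have iter : ∀ j, j ≤ D → x ∈ F j := by
    intro j
    induction j with
    | zero => intro _; exact start
    | succ j ihj => intro hj; exact step j (by omega) x hxD (ihj (by omega))
  have hFD := iter D le_rfl
  have : F D = CD y N D ⊔ I ^ (D+1) := by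
    rw [hF]
    simp only [Finset.Icc_self, Finset.sup_singleton]
  rwa [this] at hFD

end Stmt0Aux

open Stmt0Aux in
/-- If `y₁, …, yₙ` is a regular sequence in a commutative ring `R` (each `yᵢ` is a
nonzerodivisor modulo the ideal generated by the previous elements), `aᵢ ≤ Nᵢ`, and
`(y₁^{a₁} ⋯ yₙ^{aₙ}) · g ∈ ⟨y₁^{N₁}, …, yₙ^{Nₙ}⟩`, then
`g ∈ ⟨y₁^{N₁-a₁}, …, yₙ^{Nₙ-aₙ}⟩`. -/
theorem stmt0 {R : Type*} [CommRing R] {n : ℕ} (y : Fin n → R)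
    (hreg : ∀ i : Fin n, ∀ r : R,
      y i * r ∈ Ideal.span (y '' {j : Fin n | j < i}) →
      r ∈ Ideal.span (y '' {j : Fin n | j < i}))
    (g : R) (a N : Fin n → ℕ) (hle : ∀ i, a i ≤ N i)
    (h : (∏ i, y i ^ a i) * g ∈ Ideal.span (Set.range fun i => y i ^ N i)) :
    g ∈ Ideal.span (Set.range fun i => y i ^ (N i - a i)) := by
  classical
  set I : Ideal R := Ideal.span (Set.range y) with hI
  set K : Ideal R := Ideal.span (Set.range fun i => y i ^ N i) with hK
  set T : Ideal R := Ideal.span (Set.range fun i => y i ^ (N i - a i)) with hT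
  show g ∈ T
  by_cases htriv : ∃ i, N i ≤ a i
  · obtain ⟨i, hi⟩ := htriv
    have h1 : (1 : R) ∈ T := by
      refine Ideal.subset_span ⟨i, ?_⟩
      show y i ^ (N i - a i) = 1
      rw [show N i - a i = 0 by omega, pow_zero]
    have : T = ⊤ := Ideal.eq_top_iff_one T |>.mpr h1
    rw [this]; exact Submodule.mem_top
  push_neg at htriv
  -- mon y a * (elements of T) lie in K
  have mulT : ∀ τ ∈ T, mon y a * τ ∈ K := by
    intro τ hτ
    refine Submodule.span_induction ?_ ?_ ?_ ?_ hτ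
    · rintro b ⟨i, rfl⟩
      have e1 : a = (fun j => if j = i then 0 else a j) + Pi.single i (a i) := by
        funext j
        by_cases hj : j = i
        · subst hj; simp
        · simp [hj, Pi.single_eq_of_ne hj]
      have e2 : mon y a * y i ^ (N i - a i)
          = mon y (fun j => if j = i then 0 else a j) * y i ^ (N i) := by
        have h1 : mon y a = mon y (fun j => if j = i then 0 else a j) * y i ^ (a i) := by
          conv_lhs => rw [e1]
          rw [mon_add, mon_single]
        rw [h1, mul_assoc, ← pow_add]
        have h2 := hle i
        congr 2
        omega
      rw [e2]
      exact Ideal.mul_mem_left _ _ (Ideal.subset_span ⟨i, rfl⟩)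
    · rw [mul_zero]; exact Ideal.zero_mem _
    · intro p q _ _ hp hq
      rw [mul_add]; exact Ideal.add_mem _ hp hq
    · intro r p _ hp
      rw [smul_eq_mul, show mon y a * (r * p) = r * (mon y a * p) by ring]
      exact Ideal.mul_mem_left _ _ hp
  -- pigeonhole
  set M₀ : ℕ := (∑ i, (N i - a i - 1)) + 1 with hM₀
  have pig : I ^ M₀ ≤ T := by
    intro x hx
    obtain ⟨co, hco⟩ := rep_pow y M₀ x hx
    rw [hco]
    refine Ideal.sum_mem _ fun α hα => ?_
    have hsum := mem_AT.mp hα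
    have hex : ∃ i, N i - a i ≤ α i := by
      by_contra hc
      push_neg at hc
      have : ∀ i ∈ Finset.univ, α i ≤ N i - a i - 1 := by
        intro i _
        have := hc i
        have := htriv i
        omega
      have := Finset.sum_le_sum this
      omega
    obtain ⟨i, hi⟩ := hex
    have hdvd : y i ^ (N i - a i) ∣ mon y α :=
      dvd_trans (pow_dvd_pow (y i) hi) (Finset.dvd_prod_of_mem _ (Finset.mem_univ i))
    obtain ⟨t, ht⟩ := hdvd
    have hgen : y i ^ (N i - a i) ∈ T := Ideal.subset_span ⟨i, rfl⟩
    rw [ht]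
    exact Ideal.mul_mem_left _ _ (Ideal.mul_mem_right _ _ hgen)
  -- main loop
  have main : ∀ t : ℕ, ∃ p q : R, p ∈ T ∧ q ∈ I ^ t ∧ mon y a * q ∈ K ∧ g = p + q := by
    intro t
    induction t with
    | zero =>
      refine ⟨0, g, Ideal.zero_mem _, ?_, h, by ring⟩
      rw [pow_zero, Ideal.one_eq_top]
      exact Submodule.mem_top
    | succ t iht =>
      obtain ⟨p, q, hp, hq, hKq, hg⟩ := iht
      set D : ℕ := (∑ i, a i) + t with hD
      have hxD : mon y a * q ∈ I ^ D := by
        rw [hD, pow_add]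
        exact Ideal.mul_mem_mul (mon_mem_pow y _ a rfl) hq
      have hx2 := pushup y hreg N D (mon y a * q) hKq hxD
      obtain ⟨A, hA, B, hB, hAB⟩ := Submodule.mem_sup.mp hx2
      obtain ⟨u, hu⟩ := rep_span_image (NDiv N D) (mon y) A hA
      set u' : (Fin n → ℕ) → R := fun γ => if γ ∈ NDiv N D then u γ else 0 with hu'
      have hurep : A = ∑ γ ∈ AT n D, u' γ * mon y γ := by
        rw [hu, NDiv, Finset.sum_filter]
        refine Finset.sum_congr rfl fun γ hγ => ?_
        simp only [hu']
        by_cases hmem : γ ∈ NDiv N D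
        · rw [if_pos hmem, if_pos (mem_NDiv.mp hmem).2]
        · rw [if_neg hmem, if_neg (fun hP => hmem (mem_NDiv.mpr ⟨hγ, hP⟩)), zero_mul]
      obtain ⟨qc, hqc⟩ := rep_pow y t q hq
      -- the B-relation as a degree-D family
      have hmemaα : ∀ α ∈ AT n t, a + α ∈ AT n D := by
        intro α hα
        rw [mem_AT]
        have h1 : ∑ j, (a + α : Fin n → ℕ) j = (∑ j, a j) + ∑ j, α j := by
          simp_rw [Pi.add_apply]
          exact Finset.sum_add_distrib
        have h2 := mem_AT.mp hα
        omega
      have hrelB : ∑ γ ∈ AT n D,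
          ((∑ α ∈ AT n t, if γ = a + α then qc α else 0) - u' γ) * mon y γ = B := by
        have e1 : ∀ γ ∈ AT n D,
            ((∑ α ∈ AT n t, if γ = a + α then qc α else 0) - u' γ) * mon y γ
            = (∑ α ∈ AT n t, (if γ = a + α then qc α else 0) * mon y γ) - u' γ * mon y γ := by
          intro γ _
          rw [sub_mul, Finset.sum_mul]
        rw [Finset.sum_congr rfl e1, Finset.sum_sub_distrib]
        have e2 : ∑ γ ∈ AT n D, ∑ α ∈ AT n t, (if γ = a + α then qc α else 0) * mon y γ
            = ∑ α ∈ AT n t, qc α * mon y (a + α) := by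
          rw [Finset.sum_comm]
          refine Finset.sum_congr rfl fun α hα => ?_
          rw [Finset.sum_eq_single_of_mem (a + α) (hmemaα α hα)]
          · rw [if_pos rfl]
          · intro γ _ hne
            rw [if_neg hne, zero_mul]
        rw [e2]
        have e3 : ∑ α ∈ AT n t, qc α * mon y (a + α) = mon y a * q := by
          rw [hqc, Finset.mul_sum]
          exact Finset.sum_congr rfl fun α _ => by rw [mon_add]; ring
        rw [e3, ← hurep, ← hAB]
        ring
      have hwI := qr y hreg D _ (by rw [hrelB]; exact hB)
      have hcoef : ∀ α ∈ AT n t, qc α - u' (a + α) ∈ I := by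
        intro α hα
        have h1 := hwI (a + α) (hmemaα α hα)
        have e4 : ∑ α' ∈ AT n t, (if a + α = a + α' then qc α' else 0) = qc α := by
          rw [Finset.sum_eq_single_of_mem α hα]
          · rw [if_pos rfl]
          · intro α' _ hne
            refine if_neg fun hc => hne ?_
            funext j
            have := congrFun hc j
            simp only [Pi.add_apply] at this
            omega
        rwa [e4] at h1
      -- split q
      have hqsplit : q = (∑ α ∈ AT n t, (qc α - u' (a + α)) * mon y α)
          + ∑ α ∈ AT n t, u' (a + α) * mon y α := by
        rw [hqc, ← Finset.sum_add_distrib]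
        exact Finset.sum_congr rfl fun α _ => by ring
      set q' : R := ∑ α ∈ AT n t, (qc α - u' (a + α)) * mon y α with hq'
      set p' : R := ∑ α ∈ AT n t, u' (a + α) * mon y α with hp'
      have hq'I : q' ∈ I ^ (t+1) := by
        rw [hq']
        refine Ideal.sum_mem _ fun α hα => ?_
        rw [pow_succ']
        exact Ideal.mul_mem_mul (hcoef α hα) (mon_mem_pow y t α (mem_AT.mp hα))
      have hp'T : p' ∈ T := by
        rw [hp']
        refine Ideal.sum_mem _ fun α hα => ?_
        by_cases hmem : a + α ∈ NDiv N D
        · obtain ⟨i, hi⟩ := (mem_NDiv.mp hmem).2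
          have h5 : N i - a i ≤ α i := by
            simp only [Pi.add_apply] at hi
            omega
          have hdvd : y i ^ (N i - a i) ∣ mon y α :=
            dvd_trans (pow_dvd_pow (y i) h5) (Finset.dvd_prod_of_mem _ (Finset.mem_univ i))
          obtain ⟨t', ht'⟩ := hdvd
          have hgen : y i ^ (N i - a i) ∈ T := Ideal.subset_span ⟨i, rfl⟩
          rw [ht']
          exact Ideal.mul_mem_left _ _ (Ideal.mul_mem_right _ _ hgen)
        · simp only [hu', if_neg hmem, zero_mul]
          exact Ideal.zero_mem _
      refine ⟨p + p', q', Ideal.add_mem _ hp hp'T, hq'I, ?_, ?_⟩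
      · have e5 : mon y a * q' = mon y a * q - mon y a * p' := by
          rw [hqsplit]; ring
        rw [e5]
        exact Ideal.sub_mem _ hKq (mulT p' hp'T)
      · rw [hg, hqsplit]; ring
  obtain ⟨p, q, hp, hq, _, hg⟩ := main M₀
  rw [hg]
  exact Ideal.add_mem _ hp (pig hq)
end

section
/- Let k be a field of characteristic p > 0 and f = x·y·g ∈ k[x, y] a homogeneous polynomial of degree d ≥ 3, where g is a homogeneous polynomial of degree d − 2. If N and e are natural numbers with f^N ∈ ⟨x^{p^e}, y^{p^e}⟩, then N·(d−1) ≥ p^e, i.e., N/p^e ≥ 1/(d−1). -/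
open MvPolynomial

/-!
Write `q = pᵉ`. Since `(xy)^N` is a monomial and `⟨x^q, y^q⟩` is a monomial ideal, membership of
`(xy)^N g^N` forces `g^N ∈ ⟨x^{q-N}, y^{q-N}⟩` (`x, y` is a regular sequence). A nonzero polynomial
in `⟨x^r, y^r⟩` has total degree at least `r`, and `g^N` is homogeneous of degree `N(d-2)`, so
`q - N ≤ N(d-2)`.
-/

namespace MvPolynomial

variable {σ R : Type*} [CommSemiring R]

theorem mem_ideal_span_X_pow_iff {φ : MvPolynomial σ R} {q : σ → ℕ} :
    φ ∈ Ideal.span (Set.range fun i => (X i : MvPolynomial σ R) ^ q i) ↔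
      ∀ m ∈ φ.support, ∃ i, q i ≤ m i := by
  have hgen : (Set.range fun i => (X i : MvPolynomial σ R) ^ q i) =
      (fun s => monomial s (1 : R)) '' Set.range fun i => Finsupp.single i (q i) := by
    rw [← Set.range_comp]
    simp only [Function.comp_def, X_pow_eq_monomial]
  simp [hgen, mem_ideal_span_monomial_image, Finsupp.single_le_iff]

theorem mem_ideal_span_X_pow_tsub_of_monomial_mul {φ : MvPolynomial σ R} {s : σ →₀ ℕ}
    {q : σ → ℕ}
    (h : monomial s 1 * φ ∈ Ideal.span (Set.range fun i => (X i : MvPolynomial σ R) ^ q i)) :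
    φ ∈ Ideal.span (Set.range fun i => (X i : MvPolynomial σ R) ^ (q i - s i)) := by
  rw [mem_ideal_span_X_pow_iff] at h ⊢
  intro m hm
  have hsm : s + m ∈ (monomial s 1 * φ).support := by
    rwa [mem_support_iff, coeff_monomial_mul, one_mul, ← mem_support_iff]
  obtain ⟨i, hi⟩ := h _ hsm
  exact ⟨i, by simp only [Finsupp.add_apply] at hi; omega⟩

theorem le_totalDegree_of_mem_ideal_span_X_pow {φ : MvPolynomial σ R} {r : ℕ} (hφ : φ ≠ 0)
    (h : φ ∈ Ideal.span (Set.range fun i => (X i : MvPolynomial σ R) ^ r)) :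
    r ≤ φ.totalDegree := by
  obtain ⟨m, hm⟩ := support_nonempty.mpr hφ
  obtain ⟨i, hi⟩ := mem_ideal_span_X_pow_iff.mp h m hm
  exact hi.trans ((Finsupp.le_degree i m).trans (le_totalDegree hm))

end MvPolynomial

theorem stmt5_general {k : Type*} [Field k] (p : ℕ)
    (g : MvPolynomial (Fin 2) k) (d : ℕ) (hd : 3 ≤ d)
    (hg : g.IsHomogeneous (d - 2)) (hg0 : g ≠ 0)
    (N e : ℕ)
    (hmem : (X 0 * X 1 * g) ^ N ∈
      Ideal.span (Set.range fun i : Fin 2 => (X i : MvPolynomial (Fin 2) k) ^ p ^ e)) :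
    p ^ e ≤ N * (d - 1) := by
  set t : Fin 2 →₀ ℕ := Finsupp.single 0 N + Finsupp.single 1 N
  have hfactor : (X 0 * X 1 * g : MvPolynomial (Fin 2) k) ^ N = monomial t 1 * g ^ N := by
    rw [mul_pow, mul_pow, X_pow_eq_monomial, X_pow_eq_monomial, monomial_mul, one_mul]
  have hcolon := mem_ideal_span_X_pow_tsub_of_monomial_mul (hfactor ▸ hmem)
  have ht : ∀ i, p ^ e - t i = p ^ e - N := by
    intro i
    fin_cases i <;> simp [t]
  simp only [ht] at hcolon
  have hlow := le_totalDegree_of_mem_ideal_span_X_pow (pow_ne_zero N hg0) hcolon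
  have hup : (g ^ N).totalDegree ≤ N * (d - 2) :=
    (hg.pow N).totalDegree_le.trans_eq (mul_comm _ _)
  have : d - 1 = d - 2 + 1 := by omega
  rw [this, Nat.mul_succ]
  omega

/-- Let `f = x·y·g ∈ k[x,y]` be homogeneous of degree `d ≥ 3` with `g` homogeneous of degree
`d − 2`. If `f^N ∈ ⟨x^{pᵉ}, y^{pᵉ}⟩`, then `N·(d−1) ≥ pᵉ`. -/
theorem stmt5 {k : Type*} [Field k] (p : ℕ) [Fact p.Prime] [CharP k p]
    (g : MvPolynomial (Fin 2) k) (d : ℕ) (hd : 3 ≤ d)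
    (hg : g.IsHomogeneous (d - 2)) (hg0 : g ≠ 0)
    (N e : ℕ)
    (hmem : (X 0 * X 1 * g) ^ N ∈
      Ideal.span (Set.range fun i : Fin 2 => (X i : MvPolynomial (Fin 2) k) ^ p ^ e)) :
    p ^ e ≤ N * (d - 1) :=
  stmt5_general p g d hd hg hg0 N e hmem
end

section
/- Let k be a field of characteristic p > 0, S = k[x_1, ..., x_n] with homogeneous maximal ideal 𝔪, and f ∈ 𝔪. Then f ∈ 𝔪^{[p^e]} if and only if fpt(f) ≤ 1/p^e, where fpt(f) = inf { N/p^E : f^N ∈ 𝔪^{[p^E]} }. Moreover, if f ∉ 𝔪^{[p^e]}, then fpt(f) ≥ 1/p^e + 1/p^{2e}. -/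
open MvPolynomial

section Aux

variable {k : Type*} [Field k] {p n : ℕ} [Fact p.Prime] [CharP k p]

private lemma mem_spanQ_iff {q : ℕ} {g : MvPolynomial (Fin n) k} :
    g ∈ Ideal.span (Set.range fun i : Fin n => (X i : MvPolynomial (Fin n) k) ^ q) ↔
      ∀ a ∈ g.support, ∃ i, q ≤ a i := by
  have h : (Set.range fun i : Fin n => (X i : MvPolynomial (Fin n) k) ^ q)
      = (fun s => monomial s (1 : k)) '' (Set.range fun i : Fin n => Finsupp.single i q) := by
    rw [← Set.range_comp]
    refine congrArg _ (funext fun i => ?_)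
    simp [Function.comp, X_pow_eq_monomial]
  rw [h, mem_ideal_span_monomial_image]
  constructor
  · intro H a ha
    obtain ⟨si, ⟨i, rfl⟩, hle⟩ := H a ha
    exact ⟨i, Finsupp.single_le_iff.mp hle⟩
  · intro H a ha
    obtain ⟨i, hi⟩ := H a ha
    exact ⟨Finsupp.single i q, ⟨i, rfl⟩, Finsupp.single_le_iff.mpr hi⟩

private lemma pow_ppow (s : ℕ) (g : MvPolynomial (Fin n) k) :
    g ^ p ^ s = ∑ b ∈ g.support, monomial (p ^ s • b) (coeff b g ^ p ^ s) := by
  conv_lhs => rw [g.as_sum]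
  rw [sum_pow_char_pow]
  exact Finset.sum_congr rfl fun b _ => by rw [monomial_pow]

private lemma smul_cancel {s : ℕ} {b c : Fin n →₀ ℕ} (h : p ^ s • b = p ^ s • c) : b = c := by
  have hp : 0 < p ^ s := pow_pos (Fact.out : p.Prime).pos s
  ext i
  have := DFunLike.congr_fun h i
  simp only [Finsupp.smul_apply, smul_eq_mul] at this
  exact Nat.eq_of_mul_eq_mul_left hp this

private lemma coeff_frob (s : ℕ) (g : MvPolynomial (Fin n) k) (a : Fin n →₀ ℕ) :
    coeff (p ^ s • a) (g ^ p ^ s) = coeff a g ^ p ^ s := by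
  rw [pow_ppow, coeff_sum]
  simp_rw [coeff_monomial]
  have : ∀ b ∈ g.support,
      (if p ^ s • b = p ^ s • a then coeff b g ^ p ^ s else 0)
        = if b = a then coeff b g ^ p ^ s else 0 := by
    intro b _
    congr 1
    simp only [eq_iff_iff]
    exact ⟨fun h => smul_cancel h, fun h => by rw [h]⟩
  rw [Finset.sum_congr rfl this, Finset.sum_ite_eq' g.support a]
  by_cases ha : a ∈ g.support
  · simp [ha]
  · rw [if_neg ha, notMem_support_iff.mp ha,
      zero_pow (pow_pos (Fact.out : p.Prime).pos s).ne']

private lemma supp_frob {s : ℕ} {g : MvPolynomial (Fin n) k} {u : Fin n →₀ ℕ}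
    (hu : u ∈ (g ^ p ^ s).support) : ∃ b ∈ g.support, u = p ^ s • b := by
  rw [mem_support_iff, pow_ppow, coeff_sum] at hu
  obtain ⟨b, hb, hb'⟩ := Finset.exists_ne_zero_of_sum_ne_zero hu
  rw [coeff_monomial] at hb'
  refine ⟨b, hb, ?_⟩
  by_contra h
  exact hb' (if_neg fun hh => h hh.symm)

/-- Frobenius descent: `g^{p^s} ∈ 𝔪^{[p^{e+s}]}` implies `g ∈ 𝔪^{[p^e]}`. -/
private lemma frob_descend {e s : ℕ} {g : MvPolynomial (Fin n) k}
    (h : g ^ p ^ s ∈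
      Ideal.span (Set.range fun i : Fin n => (X i : MvPolynomial (Fin n) k) ^ p ^ (e + s))) :
    g ∈ Ideal.span (Set.range fun i : Fin n => (X i : MvPolynomial (Fin n) k) ^ p ^ e) := by
  rw [mem_spanQ_iff] at h ⊢
  intro a ha
  have hmem : p ^ s • a ∈ (g ^ p ^ s).support := by
    rw [mem_support_iff, coeff_frob]
    exact pow_ne_zero _ (mem_support_iff.mp ha)
  obtain ⟨i, hi⟩ := h _ hmem
  refine ⟨i, ?_⟩
  have hi' : p ^ s * p ^ e ≤ p ^ s * a i := by
    calc p ^ s * p ^ e = p ^ (e + s) := by rw [← pow_add]; ring_nf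
    _ ≤ (p ^ s • a) i := hi
    _ = p ^ s * a i := by simp [Finsupp.smul_apply]
  exact Nat.le_of_mul_le_mul_left hi' (pow_pos (Fact.out : p.Prime).pos s)

/-- If `f ∉ 𝔪^{[p^e]}` then `f^{p^e+1} ∉ 𝔪^{[p^{2e}]}`. -/
private lemma not_mem_frobmul {e : ℕ} {f : MvPolynomial (Fin n) k}
    (h : f ∉ Ideal.span (Set.range fun i : Fin n => (X i : MvPolynomial (Fin n) k) ^ p ^ e)) :
    f ^ (p ^ e + 1) ∉
      Ideal.span (Set.range fun i : Fin n => (X i : MvPolynomial (Fin n) k) ^ p ^ (2 * e)) := by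
  rw [mem_spanQ_iff] at h
  push_neg at h
  obtain ⟨a0, ha0, ha0'⟩ := h
  have hTne : (f.support.filter (fun a => ∀ i, a i < p ^ e)).Nonempty :=
    ⟨a0, Finset.mem_filter.mpr ⟨ha0, ha0'⟩⟩
  obtain ⟨a, haT, hmin⟩ :=
    (f.support.filter (fun a => ∀ i, a i < p ^ e)).exists_min_image (fun b => ∑ i, b i) hTne
  obtain ⟨ha, hlt⟩ := Finset.mem_filter.mp haT
  have hcoeff : coeff (p ^ e • a + a) (f ^ (p ^ e + 1)) = coeff a f ^ p ^ e * coeff a f := by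
    rw [pow_succ, coeff_mul]
    rw [Finset.sum_eq_single_of_mem (p ^ e • a, a)]
    · rw [coeff_frob]
    · exact Finset.HasAntidiagonal.mem_antidiagonal.mpr rfl
    · rintro ⟨u, c⟩ hx hne
      by_contra hnz
      have hu : u ∈ (f ^ p ^ e).support := by
        rw [mem_support_iff]; intro h0
        exact hnz (by simp [h0])
      have hc : c ∈ f.support := by
        rw [mem_support_iff]; intro h0
        exact hnz (by simp [h0])
      obtain ⟨b, hb, rfl⟩ := supp_frob hu
      have heq : ∀ i, p ^ e * b i + c i = p ^ e * a i + a i := by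
        intro i
        have := DFunLike.congr_fun (Finset.HasAntidiagonal.mem_antidiagonal.mp hx) i
        simpa [Finsupp.smul_apply, smul_eq_mul] using this
      have hba : ∀ i, b i ≤ a i := by
        intro i
        by_contra hgt
        push_neg at hgt
        have h1 : p ^ e * a i + p ^ e ≤ p ^ e * b i := by
          calc p ^ e * a i + p ^ e = p ^ e * (a i + 1) := by ring
          _ ≤ p ^ e * b i := Nat.mul_le_mul_left _ hgt
        have h2 : p ^ e * b i ≤ p ^ e * a i + a i := (heq i).le.trans' (Nat.le_add_right _ _)
        have h3 : p ^ e ≤ a i := by omega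
        exact absurd h3 (not_le.mpr (hlt i))
      have hbT : b ∈ f.support.filter (fun a => ∀ i, a i < p ^ e) :=
        Finset.mem_filter.mpr ⟨hb, fun i => lt_of_le_of_lt (hba i) (hlt i)⟩
      have hsum : ∑ i, b i = ∑ i, a i :=
        le_antisymm (Finset.sum_le_sum fun i _ => hba i) (hmin b hbT)
      have hab : b = a := by
        ext i
        exact (Finset.sum_eq_sum_iff_of_le (fun i _ => hba i)).mp hsum i (Finset.mem_univ i)
      have hca : c = a := by
        have h4 := Finset.HasAntidiagonal.mem_antidiagonal.mp hx
        rw [hab] at h4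
        exact add_left_cancel h4
      exact hne (by rw [hab, hca])
  have hvmem : p ^ e • a + a ∈ (f ^ (p ^ e + 1)).support := by
    rw [mem_support_iff, hcoeff]
    exact mul_ne_zero (pow_ne_zero _ (mem_support_iff.mp ha)) (mem_support_iff.mp ha)
  intro hmem
  rw [mem_spanQ_iff] at hmem
  obtain ⟨i, hi⟩ := hmem _ hvmem
  have hvi : (p ^ e • a + a) i = p ^ e * a i + a i := by simp [Finsupp.smul_apply]
  have hlt2 : (p ^ e • a + a) i < p ^ e * p ^ e := by
    rw [hvi]
    calc p ^ e * a i + a i < p ^ e * a i + p ^ e := Nat.add_lt_add_left (hlt i) _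
    _ = p ^ e * (a i + 1) := by ring
    _ ≤ p ^ e * p ^ e := Nat.mul_le_mul_left _ (hlt i)
  have h2e : p ^ (2 * e) = p ^ e * p ^ e := by rw [← pow_add]; ring_nf
  omega

/-- The key numeric bound: if `f ∈ 𝔪`, `f ∉ 𝔪^{[p^e]}` and `f^N ∈ 𝔪^{[p^E]}`, then
`(p^e + 1) p^E ≤ N p^{2e}`. -/
private lemma key_nat {f : MvPolynomial (Fin n) k}
    (hfm : f ∈ Ideal.span (Set.range (X : Fin n → MvPolynomial (Fin n) k)))
    {e : ℕ}
    (hnot : f ∉ Ideal.span (Set.range fun i : Fin n => (X i : MvPolynomial (Fin n) k) ^ p ^ e))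
    (N E : ℕ)
    (hN : f ^ N ∈
      Ideal.span (Set.range fun i : Fin n => (X i : MvPolynomial (Fin n) k) ^ p ^ E)) :
    (p ^ e + 1) * p ^ E ≤ N * p ^ (2 * e) := by
  have hp : 2 ≤ p := (Fact.out : p.Prime).two_le
  have hppos : 0 < p := by omega
  rcases Nat.eq_zero_or_pos e with rfl | he
  · exact absurd (by simpa using hfm) hnot
  have hN1 : 1 ≤ N := by
    rcases Nat.eq_zero_or_pos N with rfl | h
    · exfalso
      rw [pow_zero, mem_spanQ_iff] at hN
      obtain ⟨i, hi⟩ := hN 0 (by simp [mem_support_iff])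
      simp only [Finsupp.coe_zero, Pi.zero_apply, Nat.le_zero] at hi
      exact (pow_pos hppos E).ne' hi
    · exact h
  rcases lt_or_ge E e with hEe | hEe
  · -- E < e : use N ≥ 1
    have h1 : p ^ e + 1 ≤ p ^ (e + 1) := by
      have : p ^ e + p ^ e ≤ p * p ^ e := by
        have := Nat.one_le_iff_ne_zero.mpr (pow_pos hppos e).ne'
        nlinarith [pow_pos hppos e]
      have h2 : 1 ≤ p ^ e := pow_pos hppos e
      calc p ^ e + 1 ≤ p ^ e + p ^ e := by omega
      _ ≤ p * p ^ e := this
      _ = p ^ (e + 1) := by ring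
    have h2 : p ^ E ≤ p ^ (e - 1) := Nat.pow_le_pow_right hppos (by omega)
    calc (p ^ e + 1) * p ^ E ≤ p ^ (e + 1) * p ^ (e - 1) := Nat.mul_le_mul h1 h2
    _ = p ^ (2 * e) := by rw [← pow_add]; congr 1; omega
    _ ≤ N * p ^ (2 * e) := Nat.le_mul_of_pos_left _ hN1
  rcases le_or_gt E (2 * e) with hE2 | hE2
  · -- e ≤ E ≤ 2e : N ≥ p^{E-e} + 1
    have hNge : p ^ (E - e) + 1 ≤ N := by
      by_contra h'
      push_neg at h'
      have hle : N ≤ p ^ (E - e) := by omega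
      have hmem : f ^ p ^ (E - e) ∈
          Ideal.span (Set.range fun i : Fin n => (X i : MvPolynomial (Fin n) k) ^ p ^ E) := by
        have : f ^ p ^ (E - e) = f ^ (p ^ (E - e) - N) * f ^ N := by
          rw [← pow_add]; congr 1; omega
        rw [this]
        exact Ideal.mul_mem_left _ _ hN
      have : f ∈
          Ideal.span (Set.range fun i : Fin n => (X i : MvPolynomial (Fin n) k) ^ p ^ e) := by
        refine frob_descend (s := E - e) ?_
        have hEe' : e + (E - e) = E := by omega
        rwa [hEe']
      exact hnot this
    have hkey : p ^ e * p ^ E = p ^ (E - e) * p ^ (2 * e) := by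
      rw [← pow_add, ← pow_add]; congr 1; omega
    calc (p ^ e + 1) * p ^ E = p ^ e * p ^ E + p ^ E := by ring
    _ ≤ p ^ e * p ^ E + p ^ (2 * e) := by
        exact Nat.add_le_add_left (Nat.pow_le_pow_right hppos hE2) _
    _ = (p ^ (E - e) + 1) * p ^ (2 * e) := by rw [add_mul, one_mul, hkey]
    _ ≤ N * p ^ (2 * e) := Nat.mul_le_mul_right _ hNge
  · -- E > 2e : N ≥ (p^e+1) p^{E-2e} + 1
    have hNge : (p ^ e + 1) * p ^ (E - 2 * e) ≤ N := by
      by_contra h'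
      push_neg at h'
      have hle : N ≤ (p ^ e + 1) * p ^ (E - 2 * e) := by omega
      have hmem : f ^ ((p ^ e + 1) * p ^ (E - 2 * e)) ∈
          Ideal.span (Set.range fun i : Fin n => (X i : MvPolynomial (Fin n) k) ^ p ^ E) := by
        have : f ^ ((p ^ e + 1) * p ^ (E - 2 * e))
            = f ^ ((p ^ e + 1) * p ^ (E - 2 * e) - N) * f ^ N := by
          rw [← pow_add]; congr 1; omega
        rw [this]
        exact Ideal.mul_mem_left _ _ hN
      have h2 : (f ^ (p ^ e + 1)) ^ p ^ (E - 2 * e) ∈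
          Ideal.span (Set.range fun i : Fin n =>
            (X i : MvPolynomial (Fin n) k) ^ p ^ (2 * e + (E - 2 * e))) := by
        rw [← pow_mul]
        have : 2 * e + (E - 2 * e) = E := by omega
        rwa [this]
      exact not_mem_frobmul hnot (frob_descend h2)
    calc (p ^ e + 1) * p ^ E = ((p ^ e + 1) * p ^ (E - 2 * e)) * p ^ (2 * e) := by
          rw [mul_assoc, ← pow_add]; congr 2; omega
    _ ≤ N * p ^ (2 * e) := Nat.mul_le_mul_right _ hNge

end Aux

/-- For `f ∈ 𝔪`: `f ∈ 𝔪^{[pᵉ]}` iff `fpt(f) ≤ 1/pᵉ`; moreover if `f ∉ 𝔪^{[pᵉ]}` then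
`fpt(f) ≥ 1/pᵉ + 1/p^{2e}`, where `fpt(f) = inf { N/p^E : f^N ∈ 𝔪^{[p^E]} }`. -/
theorem stmt7 {k : Type*} [Field k] (p : ℕ) [Fact p.Prime] [CharP k p] {n : ℕ}
    (f : MvPolynomial (Fin n) k)
    (hfm : f ∈ Ideal.span (Set.range (X : Fin n → MvPolynomial (Fin n) k)))
    (e : ℕ) :
    (f ∈ Ideal.span (Set.range fun i : Fin n => (X i : MvPolynomial (Fin n) k) ^ p ^ e) ↔
      sInf {t : ℝ | ∃ N E : ℕ,
          f ^ N ∈ Ideal.span (Set.range fun i : Fin n => (X i : MvPolynomial (Fin n) k) ^ p ^ E) ∧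
          t = (N : ℝ) / (p : ℝ) ^ E} ≤ 1 / (p : ℝ) ^ e) ∧
    (f ∉ Ideal.span (Set.range fun i : Fin n => (X i : MvPolynomial (Fin n) k) ^ p ^ e) →
      1 / (p : ℝ) ^ e + 1 / (p : ℝ) ^ (2 * e) ≤
        sInf {t : ℝ | ∃ N E : ℕ,
          f ^ N ∈ Ideal.span (Set.range fun i : Fin n => (X i : MvPolynomial (Fin n) k) ^ p ^ E) ∧
          t = (N : ℝ) / (p : ℝ) ^ E}) := by
  have hp : 2 ≤ p := (Fact.out : p.Prime).two_le
  have hpR : (0 : ℝ) < (p : ℝ) := by exact_mod_cast Nat.lt_of_lt_of_le Nat.zero_lt_two hp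
  set T : Set ℝ := {t : ℝ | ∃ N E : ℕ,
      f ^ N ∈ Ideal.span (Set.range fun i : Fin n => (X i : MvPolynomial (Fin n) k) ^ p ^ E) ∧
      t = (N : ℝ) / (p : ℝ) ^ E} with hT
  have hbdd : BddBelow T := by
    refine ⟨0, ?_⟩
    rintro t ⟨N, E, _, rfl⟩
    positivity
  have hne : T.Nonempty := by
    refine ⟨1, 1, 0, ?_, by simp⟩
    simpa using hfm
  -- the key real bound
  have key : ∀ e' : ℕ,
      f ∉ Ideal.span (Set.range fun i : Fin n => (X i : MvPolynomial (Fin n) k) ^ p ^ e') →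
      ∀ t ∈ T, 1 / (p : ℝ) ^ e' + 1 / (p : ℝ) ^ (2 * e') ≤ t := by
    intro e' hnot t ht
    obtain ⟨N, E, hN, rfl⟩ := ht
    have hnat := key_nat hfm hnot N E hN
    have hR : ((p : ℝ) ^ e' + 1) * (p : ℝ) ^ E ≤ (N : ℝ) * (p : ℝ) ^ (2 * e') := by
      exact_mod_cast hnat
    have h1 : (0 : ℝ) < (p : ℝ) ^ e' := by positivity
    have h2 : (0 : ℝ) < (p : ℝ) ^ (2 * e') := by positivity
    have h3 : (0 : ℝ) < (p : ℝ) ^ E := by positivity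
    rw [div_add_div _ _ (ne_of_gt h1) (ne_of_gt h2), div_le_div_iff₀ (by positivity) h3]
    have hpe : (p : ℝ) ^ (2 * e') = (p : ℝ) ^ e' * (p : ℝ) ^ e' := by
      rw [← pow_add]; congr 1; omega
    nlinarith [mul_le_mul_of_nonneg_right hR (le_of_lt h1)]
  constructor
  · constructor
    · intro hmem
      have h1 : (1 : ℝ) / (p : ℝ) ^ e ∈ T := by
        refine ⟨1, e, by simpa using hmem, by simp⟩
      exact csInf_le hbdd h1
    · intro hinf
      by_contra hnot
      have hge := le_csInf hne (key e hnot)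
      have h2 : (0 : ℝ) < 1 / (p : ℝ) ^ (2 * e) := by positivity
      linarith
  · intro hnot
    exact le_csInf hne (key e hnot)
end

section
/- Let k be an infinite field of characteristic p > 0, q = p^e with q + 1 ≥ n + 1 ≥ 4, and let f ∈ k[x_0, x_1, ..., x_n] be a homogeneous polynomial of degree q+1 such that for every nonzero linear form L, the image of f in k[x_0, ..., x_n]/⟨L⟩ lies in the ideal generated by the q-th powers of the variables (i.e., every hyperplane section is a Frobenius form). Then f itself is a Frobenius form, i.e., f ∈ ⟨x_0^q, x_1^q, ..., x_n^q⟩. -/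
/-!
Suppose a monomial `x^d` of `f` has all exponents `< q`. Since `d` has degree `q + 1` and there are
at least four variables, some two exponents satisfy `d i + d j < q`. The substitution
`x_j ↦ t x_i` kills `x_j - t x_i` and preserves the ideal of `q`-th powers, so by hypothesis the
coefficient of the merged monomial `x^μ` (`μ i = d i + d j`, `μ j = 0`, all exponents `< q`) in
the substituted form vanishes for every `t`. That coefficient is a polynomial in `t` whose
`t^(d j)`-coefficient is the coefficient of `x^d` in `f`, because `d` is the only monomial with
that `x_j`-exponent merging to `μ`. As `k` is infinite the polynomial is zero, so `x^d` does not
occur in `f`.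
-/

open MvPolynomial Function

namespace Finsupp

variable {α M : Type*} [DecidableEq α]

theorem mapDomain_update_id [AddCommMonoid M] (i j : α) (d : α →₀ M) :
    d.mapDomain (Function.update id j i) = d.erase j + single i (d j) := by
  conv_lhs => rw [← d.erase_add_single j]
  rw [mapDomain_add, mapDomain_single, Function.update_self,
    mapDomain_congr (g := id) fun l hl =>
      Function.update_of_ne (by rintro rfl; simp at hl) _ _, mapDomain_id]

theorem eq_of_mapDomain_update_id_eq [AddCancelCommMonoid M] {i j : α} {d d' : α →₀ M}
    (h : d.mapDomain (Function.update id j i) = d'.mapDomain (Function.update id j i))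
    (hj : d j = d' j) : d = d' := by
  rw [mapDomain_update_id, mapDomain_update_id, hj, add_left_inj] at h
  rw [← d.erase_add_single j, ← d'.erase_add_single j, h, hj]

theorem mapDomain_update_id_apply_lt {i j : α} (hij : i ≠ j) {d : α →₀ ℕ} {q : ℕ}
    (hd : ∀ l, d l < q) (hdij : d i + d j < q) (l : α) :
    d.mapDomain (Function.update id j i) l < q := by
  rw [mapDomain_update_id, add_apply, single_apply]
  split_ifs with hil
  · rwa [← hil, erase_ne hij]
  · rw [erase_apply]
    split_ifs <;> simp [hd l, (Nat.zero_le _).trans_lt (hd l)]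

theorem exists_ne_add_lt_of_degree_eq [Fintype α] (hα : 4 ≤ Fintype.card α) {q : ℕ}
    {d : α →₀ ℕ} (hd : ∀ l, d l < q) (hdeg : d.degree = q + 1) :
    ∃ i j, i ≠ j ∧ d i + d j < q := by
  obtain ⟨j⟩ : Nonempty α := Fintype.card_pos_iff.1 (by omega)
  by_contra! h
  have hsum : (Finset.univ.erase j).card • (q - d j) ≤ ∑ l ∈ Finset.univ.erase j, d l :=
    Finset.card_nsmul_le_sum _ _ _ fun l hl => by
      have := h l j (Finset.ne_of_mem_erase hl)
      omega
  rw [Finset.card_erase_of_mem (Finset.mem_univ j), Finset.card_univ, smul_eq_mul] at hsum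
  rw [degree_eq_sum, ← Finset.add_sum_erase _ _ (Finset.mem_univ j)] at hdeg
  have : 3 * (q - d j) ≤ (Fintype.card α - 1) * (q - d j) := Nat.mul_le_mul_right _ (by omega)
  have := hd j
  omega

end Finsupp

namespace MvPolynomial

variable {σ R : Type*}

theorem mem_span_X_pow_iff [CommSemiring R] {q : ℕ} {g : MvPolynomial σ R} :
    g ∈ Ideal.span (Set.range fun i => (X i : MvPolynomial σ R) ^ q) ↔
      ∀ d ∈ g.support, ∃ i, q ≤ d i := by
  have : (Set.range fun i => (X i : MvPolynomial σ R) ^ q) =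
      (fun s => monomial s (1 : R)) '' Set.range fun i => Finsupp.single i q := by
    rw [← Set.range_comp]
    simp [comp_def, X_pow_eq_monomial]
  simp [this, mem_ideal_span_monomial_image, Finsupp.single_le_iff]

variable [DecidableEq σ]

theorem aeval_update_X_C_mul_X_monomial [CommSemiring R] (i j : σ) (t : R) (d : σ →₀ ℕ)
    (c : R) :
    aeval (update X j (C t * X i)) (monomial d c) =
      monomial (d.mapDomain (update id j i)) (c * t ^ d j) := by
  induction d using Finsupp.induction generalizing c with
  | zero => simp
  | single_add l e d _ _ ih =>
    rw [← one_mul c, ← monomial_mul, ← X_pow_eq_monomial, map_mul, map_pow, aeval_X, ih,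
      Finsupp.mapDomain_add, Finsupp.mapDomain_single, Finsupp.add_apply, pow_add]
    rcases eq_or_ne l j with rfl | hl
    · rw [update_self, update_self, Finsupp.single_eq_same, mul_pow, ← C_pow,
        X_pow_eq_monomial, C_mul_monomial, monomial_mul]
      ring_nf
    · rw [update_of_ne hl, update_of_ne hl, Finsupp.single_eq_of_ne hl.symm, X_pow_eq_monomial,
        monomial_mul, id]
      ring_nf

theorem aeval_update_X_C_mul_X_mem_span_X_pow [CommRing R] {i j : σ} (hij : i ≠ j) (t : R)
    {q : ℕ} {f : MvPolynomial σ R}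
    (hf : f ∈ Ideal.span
      ({X j - C t * X i} ∪ Set.range fun l => (X l : MvPolynomial σ R) ^ q)) :
    aeval (update X j (C t * X i)) f ∈
      Ideal.span (Set.range fun l => (X l : MvPolynomial σ R) ^ q) := by
  refine Ideal.mem_comap.1 ((Ideal.span_le.2 ?_ : _ ≤ Ideal.comap (aeval _) _) hf)
  rintro _ (hL | ⟨l, rfl⟩)
  · rw [Set.mem_singleton_iff.1 hL]
    simp [hij]
  · rw [SetLike.mem_coe, Ideal.mem_comap, map_pow, aeval_X]
    rcases eq_or_ne l j with rfl | hl
    · rw [update_self, mul_pow]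
      exact Ideal.mul_mem_left _ _ (Ideal.subset_span ⟨i, rfl⟩)
    · rw [update_of_ne hl]
      exact Ideal.subset_span ⟨l, rfl⟩

noncomputable def substCoeffPoly [CommSemiring R] (i j : σ) (f : MvPolynomial σ R)
    (μ : σ →₀ ℕ) : Polynomial R :=
  ∑ d ∈ f.support with d.mapDomain (update id j i) = μ, Polynomial.monomial (d j) (coeff d f)

theorem eval_substCoeffPoly [CommSemiring R] (i j : σ) (f : MvPolynomial σ R) (μ : σ →₀ ℕ)
    (t : R) :
    (substCoeffPoly i j f μ).eval t = coeff μ (aeval (update X j (C t * X i)) f) := by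
  conv_rhs => rw [f.as_sum]
  rw [substCoeffPoly, Polynomial.eval_finsetSum, map_sum, coeff_sum, Finset.sum_filter]
  refine Finset.sum_congr rfl fun d _ => ?_
  rw [aeval_update_X_C_mul_X_monomial, coeff_monomial]
  split_ifs <;> simp

theorem coeff_substCoeffPoly_mapDomain [CommSemiring R] (i j : σ) (f : MvPolynomial σ R)
    (d : σ →₀ ℕ) :
    (substCoeffPoly i j f (d.mapDomain (update id j i))).coeff (d j) = coeff d f := by
  rw [substCoeffPoly, Polynomial.finsetSum_coeff, Finset.sum_eq_single d]
  · exact Polynomial.coeff_monomial_same _ _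
  · intro d' hd' hne
    rw [Polynomial.coeff_monomial, if_neg]
    exact fun hj => hne (Finsupp.eq_of_mapDomain_update_id_eq (Finset.mem_filter.1 hd').2 hj)
  · intro hd
    rw [Polynomial.coeff_monomial_same, ← notMem_support_iff]
    simpa using hd

theorem coeff_eq_zero_of_forall_mem_span_X_sub_C_mul_X [CommRing R] [IsDomain R] [Infinite R]
    {q : ℕ} {i j : σ} (hij : i ≠ j) {f : MvPolynomial σ R}
    (hf : ∀ t : R,
      f ∈ Ideal.span ({X j - C t * X i} ∪ Set.range fun l => (X l : MvPolynomial σ R) ^ q))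
    {d : σ →₀ ℕ} (hd : ∀ l, d.mapDomain (update id j i) l < q) :
    coeff d f = 0 := by
  have hP : substCoeffPoly i j f (d.mapDomain (update id j i)) = 0 :=
    Polynomial.zero_of_eval_zero _ fun t => by
      rw [eval_substCoeffPoly, ← notMem_support_iff]
      intro hmem
      obtain ⟨l, hl⟩ :=
        mem_span_X_pow_iff.1 (aeval_update_X_C_mul_X_mem_span_X_pow hij t (hf t)) _ hmem
      exact (hd l).not_ge hl
  rw [← coeff_substCoeffPoly_mapDomain, hP, Polynomial.coeff_zero]

theorem X_sub_C_mul_X_ne_zero [CommRing R] [Nontrivial R] {i j : σ} (hij : i ≠ j) (t : R) :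
    (X j - C t * X i : MvPolynomial σ R) ≠ 0 := by
  intro h
  simpa [coeff_X, Finsupp.single_left_inj, hij] using congrArg (coeff (Finsupp.single j 1)) h

end MvPolynomial

theorem stmt16_general {k : Type*} [Field k] [Infinite k] (p : ℕ)
    {n : ℕ} (e : ℕ) (hn : 3 ≤ n)
    (f : MvPolynomial (Fin (n + 1)) k) (hf : f.IsHomogeneous (p ^ e + 1))
    (hsec : ∀ L : MvPolynomial (Fin (n + 1)) k, L.IsHomogeneous 1 → L ≠ 0 →
      f ∈ Ideal.span ({L} ∪ Set.range fun i : Fin (n + 1) =>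
        (X i : MvPolynomial (Fin (n + 1)) k) ^ p ^ e)) :
    f ∈ Ideal.span (Set.range fun i : Fin (n + 1) =>
      (X i : MvPolynomial (Fin (n + 1)) k) ^ p ^ e) := by
  refine mem_span_X_pow_iff.2 fun d hd => ?_
  by_contra! hsmall
  have hdeg : d.degree = p ^ e + 1 := by
    simpa [Finsupp.degree_eq_weight_one, Pi.one_def] using hf (mem_support_iff.1 hd)
  obtain ⟨i, j, hij, hlt⟩ :=
    Finsupp.exists_ne_add_lt_of_degree_eq (by simpa using hn) hsmall hdeg
  refine mem_support_iff.1 hd <| coeff_eq_zero_of_forall_mem_span_X_sub_C_mul_X hij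
    (fun t => hsec _ ?_ ?_) (Finsupp.mapDomain_update_id_apply_lt hij hsmall hlt)
  · exact (isHomogeneous_X k j).sub (isHomogeneous_C_mul_X t i)
  · exact X_sub_C_mul_X_ne_zero hij t

/-- If every hyperplane section of a degree `q+1` hypersurface is a Frobenius form
(`k` infinite, `q = pᵉ`, `q + 1 ≥ n + 1 ≥ 4`), then the defining form is itself a Frobenius
form. Membership of the image of `f` in `k[x₀,…,xₙ]/⟨L⟩` in the ideal generated by the `q`-th
powers of the variables is expressed as `f ∈ ⟨L⟩ + ⟨x₀^q, …, xₙ^q⟩`. -/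
theorem stmt16 {k : Type*} [Field k] [Infinite k] (p : ℕ) [Fact p.Prime] [CharP k p]
    {n : ℕ} (e : ℕ) (hn : 3 ≤ n) (hq : n ≤ p ^ e)
    (f : MvPolynomial (Fin (n + 1)) k) (hf : f.IsHomogeneous (p ^ e + 1))
    (hsec : ∀ L : MvPolynomial (Fin (n + 1)) k, L.IsHomogeneous 1 → L ≠ 0 →
      f ∈ Ideal.span ({L} ∪ Set.range fun i : Fin (n + 1) =>
        (X i : MvPolynomial (Fin (n + 1)) k) ^ p ^ e)) :
    f ∈ Ideal.span (Set.range fun i : Fin (n + 1) =>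
      (X i : MvPolynomial (Fin (n + 1)) k) ^ p ^ e) :=
  stmt16_general p e hn f hf hsec
end
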